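/- arXiv:2601.07508 — 3 statements merged into one kernel-verified Lean document; each statement's English description precedes it below -/
import Mathlib

section
/- Let t ≥ 3 and p an integer with 4 ≤ p < 2^(t-1). Let x be a nonnegative integer with x ≤ 2^(t-2)·p, and let q, r be the quotient and remainder of x by p (x = q·p + r, 0 ≤ r < p). If b is any real number satisfying b = (x/p)(1+η) with |η| ≤ 2·2^(-t), then ⌊b⌋ ∈ {q−1, q, q+1}. -/
theorem stmt_0 (t : ℕ) (ht : 3 ≤ t) (p x q r : ℤ)
    (hp : 4 ≤ p) (hp' : p < 2 ^ (t - 1))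
    (hx : 0 ≤ x) (hx' : x ≤ 2 ^ (t - 2) * p)
    (hqr : x = q * p + r) (hr : 0 ≤ r) (hr' : r < p)
    (b η : ℝ) (hb : b = ((x : ℝ) / (p : ℝ)) * (1 + η))
    (hη : |η| ≤ 2 * (2 : ℝ) ^ (-(t : ℤ))) :
    ⌊b⌋ = q - 1 ∨ ⌊b⌋ = q ∨ ⌊b⌋ = q + 1 := by
  have hp0 : (0:ℝ) < (p:ℝ) := by exact_mod_cast lt_of_lt_of_le (by norm_num) hp
  set s : ℝ := (x:ℝ) / (p:ℝ) with hs
  have hs0 : 0 ≤ s := div_nonneg (by exact_mod_cast hx) hp0.le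
  -- s ≤ 2^(t-2)
  have hsle : s ≤ (2:ℝ) ^ (t - 2) := by
    rw [div_le_iff₀ hp0]
    exact_mod_cast hx'
  -- q ≤ s < q + 1
  have hql : (q:ℝ) ≤ s := by
    rw [le_div_iff₀ hp0]
    have : q * p ≤ x := by omega
    exact_mod_cast this
  have hqu : s < (q:ℝ) + 1 := by
    rw [div_lt_iff₀ hp0]
    have : x < (q + 1) * p := by nlinarith
    calc (x:ℝ) < ((q:ℝ) + 1) * p := by exact_mod_cast this
      _ = _ := by ring
  -- |s * η| ≤ 1/2
  have key : s * |η| ≤ 1/2 := by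
    have h1 : s * |η| ≤ (2:ℝ) ^ (t - 2) * (2 * (2:ℝ) ^ (-(t:ℤ))) :=
      mul_le_mul hsle hη (abs_nonneg _) (by positivity)
    have h2 : (2:ℝ) ^ (t - 2) * (2 * (2:ℝ) ^ (-(t:ℤ))) = 1/2 := by
      have ht2 : ((t - 2 : ℕ) : ℤ) = (t:ℤ) - 2 := by omega
      rw [show ((2:ℝ) ^ (t-2) : ℝ) = (2:ℝ) ^ ((t:ℤ) - 2) by
        rw [← ht2, zpow_natCast]]
      have h3 : (2:ℝ) ^ ((t:ℤ) - 2) * (2:ℝ) ^ (-(t:ℤ)) = (2:ℝ) ^ (-2:ℤ) := by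
        rw [← zpow_add₀ (by norm_num : (2:ℝ) ≠ 0)]
        congr 1; ring
      calc (2:ℝ) ^ ((t:ℤ) - 2) * (2 * (2:ℝ) ^ (-(t:ℤ)))
          = 2 * ((2:ℝ) ^ ((t:ℤ) - 2) * (2:ℝ) ^ (-(t:ℤ))) := by ring
        _ = 2 * (2:ℝ) ^ (-2:ℤ) := by rw [h3]
        _ = 1/2 := by norm_num
    linarith
  have habs : |s * η| ≤ 1/2 := by rw [abs_mul, abs_of_nonneg hs0]; exact key
  have hb1 : (q:ℝ) - 1 ≤ b := by
    rw [hb]; have := abs_le.mp habs; nlinarith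
  have hb2 : b < (q:ℝ) + 2 := by
    rw [hb]; have := abs_le.mp habs; nlinarith
  have l1 : q - 1 ≤ ⌊b⌋ := by
    apply Int.le_floor.mpr; push_cast; linarith
  have l2 : ⌊b⌋ < q + 2 := by
    apply Int.floor_lt.mpr; push_cast; linarith
  omega
end

section
/- Let t ≥ 3, p an integer with 5 ≤ p ≤ 2^(t-1), and x, y nonnegative integers with x·y ≤ (2^(t-1)/3)·p. Write x·y = j·p + r with 0 ≤ r < p. If b is any real number satisfying b = (xy/p)(1+β) with |β| ≤ 3·2^(-t), then ⌊b⌋ ∈ {j−1, j, j+1}. -/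
theorem stmt_2 (t : ℕ) (ht : 3 ≤ t) (p x y j r : ℤ)
    (hp : 5 ≤ p) (hp' : p ≤ 2 ^ (t - 1))
    (hx : 0 ≤ x) (hy : 0 ≤ y)
    (hxy : (x * y : ℝ) ≤ (2 : ℝ) ^ (t - 1) / 3 * (p : ℝ))
    (hjr : x * y = j * p + r) (hr : 0 ≤ r) (hr' : r < p)
    (b β : ℝ) (hb : b = ((x * y : ℤ) : ℝ) / (p : ℝ) * (1 + β))
    (hβ : |β| ≤ 3 * (2 : ℝ) ^ (-(t : ℤ))) :
    ⌊b⌋ = j - 1 ∨ ⌊b⌋ = j ∨ ⌊b⌋ = j + 1 := by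
  have hp0 : (0 : ℝ) < (p : ℝ) := by exact_mod_cast (by linarith : (0:ℤ) < p)
  set q : ℝ := ((x * y : ℤ) : ℝ) / (p : ℝ) with hq
  have hqval : q = (j : ℝ) + (r : ℝ) / (p : ℝ) := by
    rw [hq, hjr]
    push_cast
    field_simp
  have hrp0 : 0 ≤ (r : ℝ) / (p : ℝ) := by positivity
  have hrp1 : (r : ℝ) / (p : ℝ) < 1 := by
    rw [div_lt_one hp0]; exact_mod_cast hr'
  have hq_lb : (j : ℝ) ≤ q := by rw [hqval]; linarith
  have hq_ub : q < (j : ℝ) + 1 := by rw [hqval]; linarith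
  have hq_nonneg : 0 ≤ q := by
    rw [hq]; positivity
  have hq_bound : q ≤ (2 : ℝ) ^ (t - 1) / 3 := by
    rw [hq, div_le_iff₀ hp0]
    push_cast
    exact hxy
  -- key: 3 * 2^{-t} * (2^{t-1}/3) = 1/2
  have hpow : (3 * (2 : ℝ) ^ (-(t : ℤ))) * ((2 : ℝ) ^ (t - 1) / 3) = 1 / 2 := by
    have h1 : ((2 : ℝ) ^ (t - 1 : ℕ)) = (2 : ℝ) ^ ((t : ℤ) - 1) := by
      rw [← zpow_natCast]
      congr 1
      omega
    have h2 : (2:ℝ) ^ (-(t:ℤ)) * (2:ℝ) ^ ((t:ℤ) - 1) = (2:ℝ) ^ (-1 : ℤ) := by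
      rw [← zpow_add₀ (by norm_num : (2:ℝ) ≠ 0),
        show (-(t:ℤ) + ((t:ℤ) - 1)) = -1 by ring]
    rw [h1]
    calc 3 * (2:ℝ) ^ (-(t:ℤ)) * ((2:ℝ) ^ ((t:ℤ) - 1) / 3)
        = (2:ℝ) ^ (-(t:ℤ)) * (2:ℝ) ^ ((t:ℤ) - 1) := by ring
      _ = (2:ℝ) ^ (-1 : ℤ) := h2
      _ = 1 / 2 := by norm_num
  have hβ0 : 0 ≤ (3 * (2 : ℝ) ^ (-(t : ℤ))) := by positivity
  have herr : |q * β| ≤ 1 / 2 := by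
    rw [abs_mul, abs_of_nonneg hq_nonneg, ← hpow]
    calc q * |β| ≤ ((2 : ℝ) ^ (t - 1) / 3) * (3 * (2 : ℝ) ^ (-(t : ℤ))) := by
          apply mul_le_mul hq_bound hβ (abs_nonneg _) (by positivity)
      _ = _ := by ring
  have hb' : b = q + q * β := by rw [hb]; ring
  have habs := abs_le.mp herr
  have hlb : (j : ℝ) - 1 ≤ b := by rw [hb']; linarith
  have hub : b < (j : ℝ) + 2 := by rw [hb']; linarith
  have h1 : j - 1 ≤ ⌊b⌋ := by
    rw [Int.le_floor]; push_cast; linarith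
  have h2 : ⌊b⌋ < j + 2 := by
    rw [Int.floor_lt]; push_cast; linarith
  omega
end

section
/- Let a, b be integers with 0 ≤ a < 2^t and b ≥ 1, and let r = a mod b. Then a/b ≤ ⌊a/b⌋ + (b−1)/b, and for any real η with |η| < 2^(-t), the quantity (a/b)(1+η) lies strictly between ⌊a/b⌋ (when b does not divide a, or equal when η·a = 0) and ⌊a/b⌋ + 1. -/
theorem stmt_5 (t : ℕ) (a b : ℤ)
    (ha : 0 ≤ a) (ha' : a < 2 ^ t) (hb : 1 ≤ b) (r : ℤ) (hr : r = a % b) :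
    (a : ℝ) / (b : ℝ) ≤ (a / b : ℤ) + ((b : ℝ) - 1) / (b : ℝ) ∧
    ∀ η : ℝ, |η| < (2 : ℝ) ^ (-(t : ℤ)) →
      (((a : ℝ) / (b : ℝ)) * (1 + η) < (a / b : ℤ) + 1 ∧
       (¬ b ∣ a → ((a / b : ℤ) : ℝ) < ((a : ℝ) / (b : ℝ)) * (1 + η)) ∧
       (η * (a : ℝ) = 0 → ((a : ℝ) / (b : ℝ)) * (1 + η) = (a : ℝ) / (b : ℝ))) := by
  have hb0 : (0:ℤ) < b := hb
  have hbR : (0:ℝ) < (b:ℝ) := by exact_mod_cast hb0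
  have hmod : b * (a / b) + a % b = a := Int.mul_ediv_add_emod a b
  have hm0 : (0:ℤ) ≤ a % b := Int.emod_nonneg a (by omega)
  have hm1 : a % b < b := Int.emod_lt_of_pos a hb0
  have hEq : (a:ℝ) = (b:ℝ) * ((a/b:ℤ):ℝ) + ((a%b:ℤ):ℝ) := by exact_mod_cast hmod.symm
  have hm0R : (0:ℝ) ≤ ((a%b:ℤ):ℝ) := by exact_mod_cast hm0
  have hm1R : ((a%b:ℤ):ℝ) ≤ (b:ℝ) - 1 := by
    have h : a % b ≤ b - 1 := by omega
    have h2 : ((a % b : ℤ):ℝ) ≤ ((b - 1 : ℤ):ℝ) := by exact_mod_cast h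
    push_cast at h2
    linarith
  set q : ℝ := ((a / b : ℤ) : ℝ) with hq
  set m : ℝ := ((a % b : ℤ) : ℝ) with hm
  have hcan : ((b:ℝ)-1)/(b:ℝ)*(b:ℝ) = (b:ℝ)-1 := div_mul_cancel₀ _ hbR.ne'
  constructor
  · rw [div_le_iff₀ hbR]
    nlinarith
  · intro η hη
    have h2t : (0:ℝ) < (2:ℝ) ^ (-(t:ℤ)) := by positivity
    have h2t' : (2:ℝ) ^ (-(t:ℤ)) * (2:ℝ) ^ (t:ℕ) = 1 := by
      rw [zpow_neg, zpow_natCast]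
      field_simp
    have haR : (a:ℝ) < (2:ℝ) ^ (t:ℕ) := by exact_mod_cast ha'
    have haR0 : (0:ℝ) ≤ (a:ℝ) := by exact_mod_cast ha
    have hηlt := abs_lt.mp hη
    have hub : η * (a:ℝ) < 1 := by nlinarith [hηlt.1, hηlt.2]
    have hlb : -1 < η * (a:ℝ) := by nlinarith [hηlt.1, hηlt.2]
    refine ⟨?_, ?_, ?_⟩
    · rw [div_mul_eq_mul_div, div_lt_iff₀ hbR]
      nlinarith
    · intro hdvd
      have hm' : a % b ≠ 0 := fun h => hdvd (Int.dvd_of_emod_eq_zero h)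
      have : (1:ℤ) ≤ a % b := by omega
      have hm1' : (1:ℝ) ≤ m := by
        rw [hm]; exact_mod_cast this
      rw [div_mul_eq_mul_div, lt_div_iff₀ hbR]
      nlinarith
    · intro h0
      have h0' : (a:ℝ) * η = 0 := by rw [mul_comm]; exact h0
      rw [mul_add, mul_one, div_mul_eq_mul_div, h0']
      simp
end
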